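/- arXiv:2207.07732 — 8 statements merged into one kernel-verified Lean document; each statement's English description precedes it below -/
import Mathlib

section
/- Let C be a real m×m matrix and S ∈ {0,1}^{m×n} a binary matrix. The following three statements are equivalent: (1) C is S-consistent; (2) for all i ∈ {1,...,m}, the transposed i-th row (C_{i,·})ᵀ belongs to ℝ^m_{⋂_{k ∈ S_{i,·}} S_{·,k}}, where the intersection is over the index set S_{i,·} := {k : S_{i,k}=1} of the binary column vectors S_{·,k} viewed as subsets of {1,...,m} (an empty intersection being the full set {1,...,m}); (3) for all j ∈ {1,...,m}, the j-th column C_{·,j} belongs to ℝ^m_{⋂_{k ∈ S^c_{j,·}} S^c_{·,k}}, where S^c denotes the entrywise complement 𝟙 − S. -/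
open Matrix

/-- Aligned subspace of matrices: entries may be nonzero only where `S` is nonzero. -/
def alignedMat {m n : ℕ} (S : Matrix (Fin m) (Fin n) ℝ) :
    Submodule ℝ (Matrix (Fin m) (Fin n) ℝ) where
  carrier := {M | ∀ i j, S i j = 0 → M i j = 0}
  zero_mem' := by intro i j _; simp
  add_mem' := by intro a b ha hb i j h; simp [Matrix.add_apply, ha i j h, hb i j h]
  smul_mem' := by intro c M hM i j h; simp [Matrix.smul_apply, hM i j h]

/-- Aligned subspace of vectors. -/
def alignedVec {m : ℕ} (b : Fin m → ℝ) : Submodule ℝ (Fin m → ℝ) where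
  carrier := {x | ∀ i, b i = 0 → x i = 0}
  zero_mem' := by intro i _; simp
  add_mem' := by intro a c ha hc i h; simp [ha i h, hc i h]
  smul_mem' := by intro r x hx i h; simp [hx i h]

/-- All-ones matrix. -/
def allOnes (m n : ℕ) : Matrix (Fin m) (Fin n) ℝ := Matrix.of fun _ _ => 1

/-- The binary mask `[𝟙 − S(𝟙 − S)ᵀ]⁺`. -/
def consistMask {m n : ℕ} (S : Matrix (Fin m) (Fin n) ℝ) : Matrix (Fin m) (Fin m) ℝ :=
  Matrix.of fun i j => max 0 ((allOnes m m - S * (allOnes m n - S)ᵀ) i j)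

/-- `C` is `S`-consistent. -/
def SConsistent {m n : ℕ} (S : Matrix (Fin m) (Fin n) ℝ)
    (C : Matrix (Fin m) (Fin m) ℝ) : Prop :=
  ∀ i j, consistMask S i j = 0 → C i j = 0

/-- A matrix has binary (0/1) entries. -/
def IsBinary {m n : ℕ} (S : Matrix (Fin m) (Fin n) ℝ) : Prop :=
  ∀ i j, S i j = 0 ∨ S i j = 1

/-- Permutation matrix `P` of `σ`, satisfying `P e_i = e_{σ i}`. -/
def permMat {k : ℕ} (σ : Equiv.Perm (Fin k)) : Matrix (Fin k) (Fin k) ℝ :=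
  Matrix.of fun i j => if i = σ j then 1 else 0

open Classical in
/-- `‖M‖₀`, the number of nonzero entries of `M`. -/
noncomputable def zeroNorm {m n : ℕ} (M : Matrix (Fin m) (Fin n) ℝ) : ℕ :=
  (Finset.univ.filter fun p : Fin m × Fin n => M p.1 p.2 ≠ 0).card

open Classical in
lemma mask_eq_zero_iff {m n : ℕ} (S : Matrix (Fin m) (Fin n) ℝ) (hS : IsBinary S)
    (i j : Fin m) : consistMask S i j = 0 ↔ ∃ k, S i k = 1 ∧ S j k = 0 := by
  have hterm : ∀ k, S i k * ((allOnes m n - S)ᵀ k j) = if S i k = 1 ∧ S j k = 0 then 1 else 0 := by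
    intro k
    simp only [Matrix.transpose_apply, Matrix.sub_apply, allOnes, Matrix.of_apply]
    rcases hS i k with h1 | h1 <;> rcases hS j k with h2 | h2 <;>
      simp [h1, h2]
  have hsum : (S * (allOnes m n - S)ᵀ) i j =
      ∑ k, (if S i k = 1 ∧ S j k = 0 then (1:ℝ) else 0) := by
    simp only [Matrix.mul_apply]
    exact Finset.sum_congr rfl fun k _ => hterm k
  have hnn : ∀ k ∈ Finset.univ, (0:ℝ) ≤ (if S i k = 1 ∧ S j k = 0 then (1:ℝ) else 0) := by
    intro k _; positivity
  constructor
  · intro h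
    by_contra hc
    push_neg at hc
    have : (S * (allOnes m n - S)ᵀ) i j = 0 := by
      rw [hsum]
      apply Finset.sum_eq_zero
      intro k _
      simp only [ite_eq_right_iff, one_ne_zero]
      intro ⟨h1, h2⟩; exact (hc k h1 h2).elim
    have hA : allOnes m m i j = 1 := rfl
    simp only [consistMask, Matrix.of_apply, Matrix.sub_apply, hA, this] at h
    norm_num at h
  · rintro ⟨k, h1, h2⟩
    have h1' : (1:ℝ) ≤ (S * (allOnes m n - S)ᵀ) i j := by
      rw [hsum]
      calc (1:ℝ) = (if S i k = 1 ∧ S j k = 0 then (1:ℝ) else 0) := by simp [h1, h2]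
        _ ≤ _ := Finset.single_le_sum hnn (Finset.mem_univ k)
    have hA : allOnes m m i j = 1 := rfl
    simp only [consistMask, Matrix.of_apply, Matrix.sub_apply, hA]
    have : (1:ℝ) - (S * (allOnes m n - S)ᵀ) i j ≤ 0 := by linarith
    exact max_eq_left this

open Classical in
/-- characterization of `S`-consistency via rows and via columns. -/
theorem stmt_3 {m n : ℕ} (S : Matrix (Fin m) (Fin n) ℝ) (hS : IsBinary S)
    (C : Matrix (Fin m) (Fin m) ℝ) :
    List.TFAE [
      SConsistent S C,
      ∀ i, C i ∈ alignedVec (fun j => if ∀ k, S i k = 1 → S j k = 1 then (1 : ℝ) else 0),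
      ∀ j, (fun i => C i j) ∈
        alignedVec (fun i => if ∀ k, S j k = 0 → S i k = 0 then (1 : ℝ) else 0)
    ] := by
  have hmem : ∀ (b : Fin m → ℝ) (x : Fin m → ℝ),
      x ∈ alignedVec b ↔ ∀ i, b i = 0 → x i = 0 := fun _ _ => Iff.rfl
  have h2cond : ∀ i j : Fin m,
      (if ∀ k, S i k = 1 → S j k = 1 then (1:ℝ) else 0) = 0 ↔ ∃ k, S i k = 1 ∧ S j k = 0 := by
    intro i j
    by_cases h : ∀ k, S i k = 1 → S j k = 1
    · rw [if_pos h]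
      constructor
      · intro h'; norm_num at h'
      · rintro ⟨k, h1, h2⟩; rw [h k h1] at h2; norm_num at h2
    · rw [if_neg h]
      simp only [eq_self_iff_true, true_iff]
      push_neg at h
      obtain ⟨k, h1, h2⟩ := h
      exact ⟨k, h1, (hS j k).resolve_right h2⟩
  have h3cond : ∀ i j : Fin m,
      (if ∀ k, S j k = 0 → S i k = 0 then (1:ℝ) else 0) = 0 ↔ ∃ k, S i k = 1 ∧ S j k = 0 := by
    intro i j
    by_cases h : ∀ k, S j k = 0 → S i k = 0
    · rw [if_pos h]
      constructor
      · intro h'; norm_num at h'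
      · rintro ⟨k, h1, h2⟩; rw [h k h2] at h1; norm_num at h1
    · rw [if_neg h]
      simp only [eq_self_iff_true, true_iff]
      push_neg at h
      obtain ⟨k, h2, h1⟩ := h
      exact ⟨k, (hS i k).resolve_left h1, h2⟩
  tfae_have 1 ↔ 2 := by
    constructor
    · intro h i
      rw [hmem]
      intro j hj
      exact h i j ((mask_eq_zero_iff S hS i j).2 ((h2cond i j).1 hj))
    · intro h i j hij
      exact (hmem _ _).1 (h i) j ((h2cond i j).2 ((mask_eq_zero_iff S hS i j).1 hij))
  tfae_have 1 ↔ 3 := by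
    constructor
    · intro h j
      rw [hmem]
      intro i hi
      exact h i j ((mask_eq_zero_iff S hS i j).2 ((h3cond i j).1 hi))
    · intro h i j hij
      exact (hmem _ _).1 (h j) i ((h3cond i j).2 ((mask_eq_zero_iff S hS i j).1 hij))
  tfae_finish
end

section
/- Let S ∈ {0,1}^{m×n} be a binary matrix and let C be an invertible real m×m matrix that is S-consistent. Then its inverse C⁻¹ is also S-consistent. -/
open Matrix

lemma mask_zero_iff {m n : ℕ} (S : Matrix (Fin m) (Fin n) ℝ) (hS : IsBinary S) (i j : Fin m) :
    consistMask S i j = 0 ↔ ∃ k, S i k ≠ 0 ∧ S j k = 0 := by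
  have hterm : ∀ k, 0 ≤ S i k * (1 - S j k) := by
    intro k
    rcases hS i k with h | h <;> rcases hS j k with h' | h' <;> simp [h, h']
  have hsum : (S * (allOnes m n - S)ᵀ) i j = ∑ k, S i k * (1 - S j k) := by
    simp [Matrix.mul_apply, allOnes, Matrix.sub_apply, Matrix.transpose_apply]
  have hmask : consistMask S i j = max 0 (1 - ∑ k, S i k * (1 - S j k)) := by
    rw [← hsum]; rfl
  constructor
  · intro h
    rw [hmask, max_eq_left_iff] at h
    have h1 : (1 : ℝ) ≤ ∑ k, S i k * (1 - S j k) := by linarith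
    have : ∃ k ∈ Finset.univ, S i k * (1 - S j k) ≠ 0 := by
      by_contra hc
      push_neg at hc
      have : ∑ k, S i k * (1 - S j k) = 0 :=
        Finset.sum_eq_zero fun k hk => hc k hk
      rw [this] at h1; linarith
    obtain ⟨k, -, hk⟩ := this
    refine ⟨k, fun h0 => hk (by simp [h0]), ?_⟩
    rcases hS j k with h' | h'
    · exact h'
    · exact absurd (by simp [h']) hk
  · rintro ⟨k, hik, hjk⟩
    have hik1 : S i k = 1 := (hS i k).resolve_left hik
    have : (1 : ℝ) ≤ ∑ l, S i l * (1 - S j l) := by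
      have := Finset.single_le_sum (fun l _ => hterm l) (Finset.mem_univ k)
      rw [hik1, hjk] at this
      simpa using this
    rw [hmask, max_eq_left_iff]
    linarith

lemma sconsistent_one {m n : ℕ} (S : Matrix (Fin m) (Fin n) ℝ) (hS : IsBinary S) :
    SConsistent S (1 : Matrix (Fin m) (Fin m) ℝ) := by
  intro i j hij
  rw [mask_zero_iff S hS] at hij
  obtain ⟨k, hik, hjk⟩ := hij
  have : i ≠ j := fun h => hik (h ▸ hjk)
  simp [Matrix.one_apply, this]

lemma sconsistent_mul {m n : ℕ} (S : Matrix (Fin m) (Fin n) ℝ) (hS : IsBinary S)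
    {A B : Matrix (Fin m) (Fin m) ℝ} (hA : SConsistent S A) (hB : SConsistent S B) :
    SConsistent S (A * B) := by
  intro i j hij
  rw [Matrix.mul_apply]
  apply Finset.sum_eq_zero
  intro k _
  by_cases h1 : consistMask S i k = 0
  · rw [hA i k h1, zero_mul]
  by_cases h2 : consistMask S k j = 0
  · rw [hB k j h2, mul_zero]
  exfalso
  rw [mask_zero_iff S hS] at hij h1 h2
  push_neg at h1 h2
  obtain ⟨l, hil, hjl⟩ := hij
  exact h2 l (h1 l hil) hjl

/-- the inverse of an invertible `S`-consistent matrix is `S`-consistent. -/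
theorem stmt_7 {m n : ℕ} (S : Matrix (Fin m) (Fin n) ℝ) (hS : IsBinary S)
    (C : Matrix (Fin m) (Fin m) ℝ) (hC : IsUnit C) (h : SConsistent S C) :
    SConsistent S C⁻¹ := by
  -- the submodule of S-consistent matrices
  set V : Submodule ℝ (Matrix (Fin m) (Fin m) ℝ) :=
    { carrier := {M | SConsistent S M}
      zero_mem' := by intro i j _; simp
      add_mem' := by intro a b ha hb i j hij; simp [Matrix.add_apply, ha i j hij, hb i j hij]
      smul_mem' := by intro c M hM i j hij; simp [Matrix.smul_apply, hM i j hij] } with hV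
  have hmul : ∀ x : V, C * (x : Matrix (Fin m) (Fin m) ℝ) ∈ V := fun x =>
    sconsistent_mul S hS h x.2
  let f : V →ₗ[ℝ] V :=
    { toFun := fun x => ⟨C * (x : Matrix (Fin m) (Fin m) ℝ), hmul x⟩
      map_add' := by intro x y; ext : 1; simp [mul_add]
      map_smul' := by intro c x; ext : 1; simp [Matrix.mul_smul] }
  have hinj : Function.Injective f := by
    intro x y hxy
    have : C * (x : Matrix (Fin m) (Fin m) ℝ) = C * (y : Matrix (Fin m) (Fin m) ℝ) :=
      congrArg Subtype.val hxy
    exact Subtype.ext (hC.mul_left_cancel this)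
  have hsurj : Function.Surjective f := (LinearMap.injective_iff_surjective).mp hinj
  obtain ⟨B, hB⟩ := hsurj ⟨1, sconsistent_one S hS⟩
  have hCB : C * (B : Matrix (Fin m) (Fin m) ℝ) = 1 := congrArg Subtype.val hB
  rw [Matrix.inv_eq_right_inv hCB]
  exact B.2
end

section
/- Let Γ be a set and Λ: Γ → ℝ^{m×m} a function with sparsity pattern S ∈ {0,1}^{m×m}. Let L be an invertible real m×m matrix, let Ŝ be the sparsity pattern of the function γ ↦ Lᵀ Λ(γ) L, let σ be a permutation of {1,...,m} such that L_{i,σ(i)} ≠ 0 for all i, and let P be the permutation matrix of σ (P e_i = e_{σ(i)} for all i). Assume the sufficient variability condition: the linear span of the set {Λ(γ) : γ ∈ Γ} equals the aligned subspace ℝ^{m×m}_S. Then S ⊆ Pᵀ Ŝ P, i.e., for all (i,j), S_{i,j} = 1 implies Ŝ_{σ(i),σ(j)} = 1. -/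
open Matrix

/-- under sufficient variability, the sparsity pattern `S` of `Λ` is
included in the permuted sparsity pattern `Pᵀ Ŝ P` of `γ ↦ Lᵀ Λ(γ) L`. -/
theorem stmt_12 {m : ℕ} {Γ : Type*} (Λ : Γ → Matrix (Fin m) (Fin m) ℝ)
    (S : Matrix (Fin m) (Fin m) ℝ) (hSbin : IsBinary S)
    (hSpat : ∀ i j, S i j = 1 ↔ ∃ γ, Λ γ i j ≠ 0)
    (L : Matrix (Fin m) (Fin m) ℝ) (hL : IsUnit L)
    (Shat : Matrix (Fin m) (Fin m) ℝ) (hShatbin : IsBinary Shat)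
    (hShatpat : ∀ i j, Shat i j = 1 ↔ ∃ γ, (Lᵀ * Λ γ * L) i j ≠ 0)
    (σ : Equiv.Perm (Fin m)) (hσ : ∀ i, L i (σ i) ≠ 0)
    (hvar : Submodule.span ℝ (Set.range Λ) = alignedMat S) :
    ∀ i j, S i j = 1 → Shat (σ i) (σ j) = 1 := by
  intro i j hS
  rw [hShatpat]
  by_contra hno
  push_neg at hno
  -- the linear functional M ↦ (Lᵀ M L) (σ i) (σ j)
  let f : Matrix (Fin m) (Fin m) ℝ →ₗ[ℝ] ℝ :=
    { toFun := fun M => (Lᵀ * M * L) (σ i) (σ j)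
      map_add' := by intro a b; simp [Matrix.mul_add, Matrix.add_mul]
      map_smul' := by intro c M; simp [Matrix.mul_smul, Matrix.smul_mul]
    }
  have hker : Submodule.span ℝ (Set.range Λ) ≤ LinearMap.ker f := by
    rw [Submodule.span_le]
    rintro _ ⟨γ, rfl⟩
    exact hno γ
  have hE : Matrix.single i j (1 : ℝ) ∈ alignedMat S := by
    intro i' j' h0
    by_cases hij : i' = i ∧ j' = j
    · exfalso; rw [hij.1, hij.2, hS] at h0; norm_num at h0
    · rw [Matrix.single_apply_of_ne]
      rintro ⟨h1, h2⟩
      exact hij ⟨h1.symm, h2.symm⟩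
  rw [← hvar] at hE
  have hf0 : f (Matrix.single i j (1 : ℝ)) = 0 := hker hE
  have hf : f (Matrix.single i j (1 : ℝ)) = L i (σ i) * L j (σ j) := by
    show (Lᵀ * Matrix.single i j (1 : ℝ) * L) (σ i) (σ j) = _
    simp [Matrix.mul_apply, Matrix.single, Matrix.transpose_apply,
      Finset.sum_ite_eq, ite_and, Finset.mul_sum]
  rw [hf] at hf0
  exact mul_ne_zero (hσ i) (hσ j) hf0
end

section
/- Let Γ be a set and Λ: Γ → ℝ^{m×m} a function with sparsity pattern S ∈ {0,1}^{m×m}. Let L be an invertible real m×m matrix, let Ŝ be the sparsity pattern of the function γ ↦ Lᵀ Λ(γ) L, let σ be a permutation of {1,...,m} such that L_{i,σ(i)} ≠ 0 for all i, and let P be the permutation matrix of σ (P e_i = e_{σ(i)} for all i). Assume: (1) sufficient variability, i.e., the linear span of {Λ(γ) : γ ∈ Γ} equals ℝ^{m×m}_S; and (2) sparsity, i.e., ‖Ŝ‖₀ ≤ ‖S‖₀, where ‖·‖₀ counts the number of nonzero entries. Then S = Pᵀ Ŝ P, and L = C Pᵀ where the matrix C := LP is both S-consistent and Sᵀ-consistent.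 -/
open Matrix

lemma shat_forward {m : ℕ} {Γ : Type*} (Λ : Γ → Matrix (Fin m) (Fin m) ℝ)
    (S L Shat : Matrix (Fin m) (Fin m) ℝ)
    (hShatpat : ∀ i j, Shat i j = 1 ↔ ∃ γ, (Lᵀ * Λ γ * L) i j ≠ 0)
    (hvar : Submodule.span ℝ (Set.range Λ) = alignedMat S)
    {i k a b : Fin m} (hS : S i k = 1) (ha : L i a ≠ 0) (hb : L k b ≠ 0) :
    Shat a b = 1 := by
  rw [hShatpat]
  by_contra h
  push_neg at h
  let f : Matrix (Fin m) (Fin m) ℝ →ₗ[ℝ] ℝ :=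
    { toFun := fun M => (Lᵀ * M * L) a b
      map_add' := by intro x y; simp [Matrix.mul_add, Matrix.add_mul]
      map_smul' := by intro c x; simp [Matrix.mul_smul, Matrix.smul_mul] }
  have hker : Submodule.span ℝ (Set.range Λ) ≤ LinearMap.ker f := by
    rw [Submodule.span_le]
    rintro _ ⟨γ, rfl⟩
    exact h γ
  have hE : Matrix.single i k (1:ℝ) ∈ alignedMat S := by
    intro p q hpq
    by_cases hp : i = p ∧ k = q
    · exact absurd hpq (by rw [← hp.1, ← hp.2, hS]; norm_num)
    · simp [Matrix.single, hp]
  have hmem := hker (hvar ▸ hE)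
  have hzero : f (Matrix.single i k (1:ℝ)) = 0 := hmem
  have hval : f (Matrix.single i k (1:ℝ)) = L i a * L k b := by
    show (Lᵀ * Matrix.single i k (1:ℝ) * L) a b = _
    simp [Matrix.mul_apply, Matrix.single, Finset.mul_sum, Finset.sum_mul, ite_mul,
      mul_ite, ite_and, Finset.sum_ite_eq, Finset.sum_ite_eq']
  rw [hval] at hzero
  exact mul_ne_zero ha hb hzero

lemma shat_backward {m : ℕ} {Γ : Type*} (Λ : Γ → Matrix (Fin m) (Fin m) ℝ)
    (S L Shat : Matrix (Fin m) (Fin m) ℝ)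
    (hSpat : ∀ i j, S i j = 1 ↔ ∃ γ, Λ γ i j ≠ 0)
    (hShatpat : ∀ i j, Shat i j = 1 ↔ ∃ γ, (Lᵀ * Λ γ * L) i j ≠ 0)
    {k l : Fin m} (h : Shat k l = 1) :
    ∃ i j, S i j = 1 ∧ L i k ≠ 0 ∧ L j l ≠ 0 := by
  obtain ⟨γ, hγ⟩ := (hShatpat k l).1 h
  have hexp : (Lᵀ * Λ γ * L) k l = ∑ q, ∑ p, L p k * Λ γ p q * L q l := by
    simp [Matrix.mul_apply, Finset.sum_mul, Matrix.transpose_apply]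
  rw [hexp] at hγ
  obtain ⟨q, _, hq⟩ := Finset.exists_ne_zero_of_sum_ne_zero hγ
  obtain ⟨p, _, hp⟩ := Finset.exists_ne_zero_of_sum_ne_zero hq
  have h1 : L p k ≠ 0 := fun hz => hp (by simp [hz])
  have h2 : Λ γ p q ≠ 0 := fun hz => hp (by simp [hz])
  have h3 : L q l ≠ 0 := fun hz => hp (by simp [hz])
  exact ⟨p, q, (hSpat p q).2 ⟨γ, h2⟩, h1, h3⟩


lemma permMat_mul_transpose {m : ℕ} (σ : Equiv.Perm (Fin m)) :
    permMat σ * (permMat σ)ᵀ = 1 := by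
  ext i j
  simp only [Matrix.mul_apply, permMat, Matrix.transpose_apply, Matrix.of_apply, Matrix.one_apply,
    ite_mul, one_mul, zero_mul]
  rw [Finset.sum_eq_single (σ.symm i)]
  · simp [Equiv.eq_symm_apply, eq_comm]
  · intro b _ hb
    simp only [ite_eq_right_iff]
    intro h1
    exact absurd (by simp [h1]) hb
  · simp

lemma mul_permMat_apply {m : ℕ} (L : Matrix (Fin m) (Fin m) ℝ) (σ : Equiv.Perm (Fin m))
    (i j : Fin m) : (L * permMat σ) i j = L i (σ j) := by
  simp only [Matrix.mul_apply, permMat, Matrix.of_apply, mul_ite, mul_one, mul_zero]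
  rw [Finset.sum_ite_eq' Finset.univ (σ j) (fun t => L i t)]
  simp

lemma mask_zero {m : ℕ} (A : Matrix (Fin m) (Fin m) ℝ) (hA : IsBinary A)
    {i j : Fin m} (h : consistMask A i j = 0) : ∃ k, A i k = 1 ∧ A j k = 0 := by
  by_contra hc
  push_neg at hc
  simp only [consistMask, Matrix.of_apply, Matrix.sub_apply, allOnes, Matrix.mul_apply,
    Matrix.transpose_apply] at h
  have hterm : ∀ k ∈ Finset.univ, A i k * ((1:ℝ) - A j k) = 0 := by
    intro k _
    rcases hA i k with h0 | h1
    · simp [h0]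
    · rcases hA j k with h0' | h1'
      · exact absurd h0' (hc k h1)
      · simp [h1']
  rw [Finset.sum_eq_zero hterm] at h
  norm_num at h

/-- under sufficient variability and sparsity, `S = Pᵀ Ŝ P` and
`L = C Pᵀ` where `C := LP` is `S`-consistent and `Sᵀ`-consistent. -/
theorem stmt_13 {m : ℕ} {Γ : Type*} (Λ : Γ → Matrix (Fin m) (Fin m) ℝ)
    (S : Matrix (Fin m) (Fin m) ℝ) (hSbin : IsBinary S)
    (hSpat : ∀ i j, S i j = 1 ↔ ∃ γ, Λ γ i j ≠ 0)
    (L : Matrix (Fin m) (Fin m) ℝ) (hL : IsUnit L)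
    (Shat : Matrix (Fin m) (Fin m) ℝ) (hShatbin : IsBinary Shat)
    (hShatpat : ∀ i j, Shat i j = 1 ↔ ∃ γ, (Lᵀ * Λ γ * L) i j ≠ 0)
    (σ : Equiv.Perm (Fin m)) (hσ : ∀ i, L i (σ i) ≠ 0)
    (hvar : Submodule.span ℝ (Set.range Λ) = alignedMat S)
    (hsparse : zeroNorm Shat ≤ zeroNorm S) :
    (∀ i j, S i j = Shat (σ i) (σ j)) ∧
    SConsistent S (L * permMat σ) ∧
    SConsistent Sᵀ (L * permMat σ) ∧
    L = (L * permMat σ) * (permMat σ)ᵀ := by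
  classical
  have hfwd : ∀ i k a b, S i k = 1 → L i a ≠ 0 → L k b ≠ 0 → Shat a b = 1 :=
    fun i k a b h1 h2 h3 => shat_forward Λ S L Shat hShatpat hvar h1 h2 h3
  -- cardinality argument
  let e : Fin m × Fin m ↪ Fin m × Fin m := (Equiv.prodCongr σ σ).toEmbedding
  let T : Finset (Fin m × Fin m) := Finset.univ.filter fun p => S p.1 p.2 ≠ 0
  let T' : Finset (Fin m × Fin m) := Finset.univ.filter fun p => Shat p.1 p.2 ≠ 0
  have hmapsub : T.map e ⊆ T' := by
    intro p hp
    obtain ⟨q, hq, rfl⟩ := Finset.mem_map.1 hp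
    simp only [T, T', Finset.mem_filter, Finset.mem_univ, true_and] at hq ⊢
    have hq1 : S q.1 q.2 = 1 := (hSbin q.1 q.2).resolve_left hq
    have := hfwd q.1 q.2 (σ q.1) (σ q.2) hq1 (hσ q.1) (hσ q.2)
    simp only [e, Equiv.toEmbedding_apply, Equiv.prodCongr_apply, Prod.map]
    rw [this]; norm_num
  have hTcard : T'.card ≤ (T.map e).card := by
    rw [Finset.card_map]
    have h1 : zeroNorm Shat = T'.card := by unfold zeroNorm; congr 1
    have h2 : zeroNorm S = T.card := by unfold zeroNorm; congr 1
    rw [h1, h2] at hsparse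
    exact hsparse
  have heq : T.map e = T' := Finset.eq_of_subset_of_card_le hmapsub hTcard
  have hiff : ∀ i j, S i j = 1 ↔ Shat (σ i) (σ j) = 1 := by
    intro i j
    constructor
    · intro h; exact hfwd i j _ _ h (hσ i) (hσ j)
    · intro h
      have hmem : ((σ i, σ j) : Fin m × Fin m) ∈ T' := by
        simp only [T', Finset.mem_filter, Finset.mem_univ, true_and]
        rw [h]; norm_num
      rw [← heq] at hmem
      obtain ⟨q, hq, hqe⟩ := Finset.mem_map.1 hmem
      simp only [e, Equiv.toEmbedding_apply, Equiv.prodCongr_apply, Prod.map, Prod.mk.injEq] at hqe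
      have hq1 : q.1 = i := σ.injective hqe.1
      have hq2 : q.2 = j := σ.injective hqe.2
      simp only [T, Finset.mem_filter, Finset.mem_univ, true_and, hq1, hq2] at hq
      exact (hSbin i j).resolve_left hq
  refine ⟨?_, ?_, ?_, ?_⟩
  · intro i j
    rcases hSbin i j with h0 | h1
    · rcases hShatbin (σ i) (σ j) with h0' | h1'
      · rw [h0, h0']
      · exact absurd ((hiff i j).2 h1') (by rw [h0]; norm_num)
    · rw [h1, (hiff i j).1 h1]
  · intro i j hm
    obtain ⟨k, hk1, hk0⟩ := mask_zero S hSbin hm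
    rw [mul_permMat_apply]
    by_contra hne
    have := (hiff j k).2 (hfwd i k (σ j) (σ k) hk1 hne (hσ k))
    rw [hk0] at this; norm_num at this
  · intro i j hm
    obtain ⟨k, hk1, hk0⟩ := mask_zero Sᵀ (fun a b => hSbin b a) hm
    rw [Matrix.transpose_apply] at hk1 hk0
    rw [mul_permMat_apply]
    by_contra hne
    have := (hiff k j).2 (hfwd k i (σ k) (σ j) hk1 (hσ k) hne)
    rw [hk0] at this; norm_num at this
  · rw [Matrix.mul_assoc, permMat_mul_transpose, Matrix.mul_one]
end

section
/- Let Γ be a set and Λ: Γ → ℝ^{m×n} a function with sparsity pattern S ∈ {0,1}^{m×n}. Let L be an invertible real m×m matrix, let Ŝ be the sparsity pattern of the function γ ↦ Lᵀ Λ(γ), let σ be a permutation of {1,...,m} such that L_{i,σ(i)} ≠ 0 for all i, and let P be the permutation matrix of σ (P e_i = e_{σ(i)} for all i). Assume the sufficient variability condition: for every column index j ∈ {1,...,n}, the linear span of {Λ(γ)_{·,j} : γ ∈ Γ} equals the aligned subspace ℝ^m_{S_{·,j}}. Then S ⊆ Pᵀ Ŝ, i.e., for all (i,j), S_{i,j}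 = 1 implies Ŝ_{σ(i),j} = 1. -/
open Matrix

/-- under columnwise sufficient variability, the sparsity pattern `S`
of `Λ` is included in the row-permuted sparsity pattern `Pᵀ Ŝ` of `γ ↦ Lᵀ Λ(γ)`. -/
theorem stmt_14 {m n : ℕ} {Γ : Type*} (Λ : Γ → Matrix (Fin m) (Fin n) ℝ)
    (S : Matrix (Fin m) (Fin n) ℝ) (hSbin : IsBinary S)
    (hSpat : ∀ i j, S i j = 1 ↔ ∃ γ, Λ γ i j ≠ 0)
    (L : Matrix (Fin m) (Fin m) ℝ) (hL : IsUnit L)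
    (Shat : Matrix (Fin m) (Fin n) ℝ) (hShatbin : IsBinary Shat)
    (hShatpat : ∀ i j, Shat i j = 1 ↔ ∃ γ, (Lᵀ * Λ γ) i j ≠ 0)
    (σ : Equiv.Perm (Fin m)) (hσ : ∀ i, L i (σ i) ≠ 0)
    (hvar : ∀ j, Submodule.span ℝ (Set.range (fun γ => fun i => Λ γ i j)) =
      alignedVec (fun i => S i j)) :
    ∀ i j, S i j = 1 → Shat (σ i) j = 1 := by
  intro i j hS
  by_contra h
  have hno : ∀ γ, (Lᵀ * Λ γ) (σ i) j = 0 := by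
    intro γ
    by_contra hγ
    exact h ((hShatpat _ _).mpr ⟨γ, hγ⟩)
  have hmem : (Pi.single i (1:ℝ) : Fin m → ℝ) ∈
      Submodule.span ℝ (Set.range fun γ => fun k => Λ γ k j) := by
    rw [hvar j]
    intro i' hi'
    rcases eq_or_ne i' i with rfl | hne
    · have h0 : S i' j = 0 := hi'
      rw [hS] at h0; exact absurd h0 one_ne_zero
    · simp [Pi.single_apply, hne]
  have key : ∑ k, L k (σ i) * (Pi.single i (1:ℝ) : Fin m → ℝ) k = 0 := by
    refine Submodule.span_induction
      (p := fun x _ => ∑ k, L k (σ i) * x k = 0) ?_ ?_ ?_ ?_ hmem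
    · rintro x ⟨γ, rfl⟩
      have := hno γ
      rw [Matrix.mul_apply] at this
      simpa [Matrix.transpose_apply] using this
    · simp
    · intro x y _ _ hx hy
      simp only [Pi.add_apply, mul_add, Finset.sum_add_distrib, hx, hy, add_zero]
    · intro c x _ hx
      simp only [Pi.smul_apply, smul_eq_mul, mul_left_comm, ← Finset.mul_sum, hx, mul_zero]
  rw [Finset.sum_eq_single i (fun k _ hk => by simp [Pi.single_apply, hk])
    (fun hk => absurd (Finset.mem_univ i) hk)] at key
  simp at key
  exact hσ i key
end

section
/- Let Γ be a set and Λ: Γ → ℝ^{m×n} a function with sparsity pattern S ∈ {0,1}^{m×n}. Let L be an invertible real m×m matrix, let Ŝ be the sparsity pattern of the function γ ↦ Lᵀ Λ(γ), let σ be a permutation of {1,...,m} such that L_{i,σ(i)} ≠ 0 for all i, and let P be the permutation matrix of σ (P e_i = e_{σ(i)} for all i). Assume: (1) sufficient variability, i.e., for every j ∈ {1,...,n}, the linear span of {Λ(γ)_{·,j} : γ ∈ Γ} equals ℝ^m_{S_{·,j}}; and (2) sparsity, i.e., ‖Ŝ‖₀ ≤ ‖S‖₀, where ‖·‖₀ counts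 the number of nonzero entries. Then S = Pᵀ Ŝ, and L = C Pᵀ where the matrix C := LP is S-consistent. -/
open Matrix

lemma mem_alignedVec {m : ℕ} {b : Fin m → ℝ} {x : Fin m → ℝ} :
    x ∈ alignedVec b ↔ ∀ i, b i = 0 → x i = 0 := Iff.rfl

/-- under columnwise sufficient variability and sparsity, `S = Pᵀ Ŝ`
and `L = C Pᵀ` where `C := LP` is `S`-consistent. -/
theorem stmt_15 {m n : ℕ} {Γ : Type*} (Λ : Γ → Matrix (Fin m) (Fin n) ℝ)
    (S : Matrix (Fin m) (Fin n) ℝ) (hSbin : IsBinary S)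
    (hSpat : ∀ i j, S i j = 1 ↔ ∃ γ, Λ γ i j ≠ 0)
    (L : Matrix (Fin m) (Fin m) ℝ) (hL : IsUnit L)
    (Shat : Matrix (Fin m) (Fin n) ℝ) (hShatbin : IsBinary Shat)
    (hShatpat : ∀ i j, Shat i j = 1 ↔ ∃ γ, (Lᵀ * Λ γ) i j ≠ 0)
    (σ : Equiv.Perm (Fin m)) (hσ : ∀ i, L i (σ i) ≠ 0)
    (hvar : ∀ j, Submodule.span ℝ (Set.range (fun γ => fun i => Λ γ i j)) =
      alignedVec (fun i => S i j))
    (hsparse : zeroNorm Shat ≤ zeroNorm S) :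
    (∀ i j, S i j = Shat (σ i) j) ∧
    SConsistent S (L * permMat σ) ∧
    L = (L * permMat σ) * (permMat σ)ᵀ := by
  classical
  have hΛzero : ∀ γ i j, S i j = 0 → Λ γ i j = 0 := by
    intro γ i j h
    by_contra hne
    have h1 : S i j = 1 := (hSpat i j).2 ⟨γ, hne⟩
    rw [h] at h1; norm_num at h1
  -- Key characterization of the nonzero entries of Shat
  have key : ∀ k j, Shat k j ≠ 0 ↔ ∃ i, S i j ≠ 0 ∧ L i k ≠ 0 := by
    intro k j
    constructor
    · intro hne
      have h1 : Shat k j = 1 := (hShatbin k j).resolve_left hne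
      obtain ⟨γ, hγ⟩ := (hShatpat k j).1 h1
      by_contra hall
      push_neg at hall
      apply hγ
      rw [Matrix.mul_apply]
      apply Finset.sum_eq_zero
      intro i _
      rcases hSbin i j with h | h
      · simp [Matrix.transpose_apply, hΛzero γ i j h]
      · have hLz : L i k = 0 := by
          by_contra hLk
          exact hLk (hall i (by rw [h]; norm_num))
        simp [Matrix.transpose_apply, hLz]
    · rintro ⟨i, hSi, hLi⟩
      have he : (Pi.single i 1 : Fin m → ℝ) ∈ alignedVec (fun i' => S i' j) := by
        rw [mem_alignedVec]
        intro i' h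
        by_cases hii : i' = i
        · subst hii; exact absurd h hSi
        · simp [Pi.single_eq_of_ne hii]
      rw [← hvar j] at he
      set φ : (Fin m → ℝ) →ₗ[ℝ] ℝ :=
        { toFun := fun x => ∑ i', L i' k * x i'
          map_add' := by intro x y; simp [mul_add, Finset.sum_add_distrib]
          map_smul' := by
            intro c x
            simp only [Pi.smul_apply, smul_eq_mul, RingHom.id_apply, Finset.mul_sum]
            congr 1; ext i'; ring } with hφ
      suffices hex : ∃ γ, (Lᵀ * Λ γ) k j ≠ 0 by
        rw [(hShatpat k j).2 hex]; norm_num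
      by_contra hall
      push_neg at hall
      have hker : Submodule.span ℝ (Set.range fun γ => fun i' => Λ γ i' j) ≤
          LinearMap.ker φ := by
        rw [Submodule.span_le]
        rintro x ⟨γ, rfl⟩
        simp only [SetLike.mem_coe, LinearMap.mem_ker]
        have hz := hall γ
        rw [Matrix.mul_apply] at hz
        simpa [hφ, Matrix.transpose_apply] using hz
      have hmem := hker he
      rw [LinearMap.mem_ker] at hmem
      apply hLi
      have : ∑ i', L i' k * (Pi.single i 1 : Fin m → ℝ) i' = 0 := hmem
      rwa [Finset.sum_eq_single i (fun i' _ hne => by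
        simp [Pi.single_eq_of_ne hne]) (fun h => absurd (Finset.mem_univ i) h),
        Pi.single_eq_same, mul_one] at this
  -- Part 1 via the counting argument
  have hpart1 : ∀ i j, S i j = Shat (σ i) j := by
    have hmap : ∀ p : Fin m × Fin n, S p.1 p.2 ≠ 0 → Shat (σ p.1) p.2 ≠ 0 := by
      intro p hp
      exact (key (σ p.1) p.2).2 ⟨p.1, hp, hσ p.1⟩
    set A : Finset (Fin m × Fin n) :=
      Finset.univ.filter (fun p : Fin m × Fin n => S p.1 p.2 ≠ 0) with hA
    set B : Finset (Fin m × Fin n) :=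
      Finset.univ.filter (fun p : Fin m × Fin n => Shat p.1 p.2 ≠ 0) with hB
    set f : Fin m × Fin n → Fin m × Fin n := fun p => (σ p.1, p.2) with hf
    have hfinj : Function.Injective f := by
      intro p q h
      simp only [hf, Prod.mk.injEq] at h
      exact Prod.ext (σ.injective h.1) h.2
    have hsub : A.image f ⊆ B := by
      intro q hq
      rw [Finset.mem_image] at hq
      obtain ⟨p, hp, rfl⟩ := hq
      rw [hA, Finset.mem_filter] at hp
      rw [hB, Finset.mem_filter]
      exact ⟨Finset.mem_univ _, hmap p hp.2⟩
    have hcardA : zeroNorm S = A.card := by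
      rw [zeroNorm, hA]
    have hcardB : zeroNorm Shat = B.card := by
      rw [zeroNorm, hB]
    have hcard : B.card ≤ (A.image f).card := by
      rw [Finset.card_image_of_injective _ hfinj, ← hcardA, ← hcardB]
      exact hsparse
    have heq : A.image f = B := Finset.eq_of_subset_of_card_le hsub hcard
    intro i j
    have hiff : S i j ≠ 0 ↔ Shat (σ i) j ≠ 0 := by
      constructor
      · intro h; exact hmap (i, j) h
      · intro h
        have hmemB : ((σ i, j) : Fin m × Fin n) ∈ B := by
          rw [hB, Finset.mem_filter]; exact ⟨Finset.mem_univ _, h⟩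
        rw [← heq, Finset.mem_image] at hmemB
        obtain ⟨p, hp, hpe⟩ := hmemB
        simp only [hf, Prod.mk.injEq] at hpe
        have : p = (i, j) := Prod.ext (σ.injective hpe.1) hpe.2
        rw [this, hA, Finset.mem_filter] at hp
        exact hp.2
    rcases hSbin i j with h | h
    · rcases hShatbin (σ i) j with h' | h'
      · rw [h, h']
      · exfalso
        exact hiff.2 (by rw [h']; norm_num) h
    · rcases hShatbin (σ i) j with h' | h'
      · exfalso
        have := hiff.1 (by rw [h]; norm_num)
        exact this h'
      · rw [h, h']
  refine ⟨hpart1, ?_, ?_⟩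
  · -- S-consistency of L * permMat σ
    intro i k hmask
    -- C i k = L i (σ k)
    have hC : (L * permMat σ) i k = L i (σ k) := by
      rw [Matrix.mul_apply]
      simp [permMat, Finset.sum_ite_eq']
    rw [hC]
    -- from the mask being 0, get j with S i j = 1 and S k j = 0
    have hsum : ∑ j, S i j * (1 - S k j) ≠ 0 := by
      simp only [consistMask, allOnes, Matrix.of_apply, Matrix.sub_apply,
        Matrix.mul_apply, Matrix.transpose_apply] at hmask
      intro hz
      rw [hz] at hmask
      norm_num at hmask
    obtain ⟨j, _, hj⟩ := Finset.exists_ne_zero_of_sum_ne_zero hsum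
    have hSij : S i j ≠ 0 := fun h => hj (by rw [h]; ring)
    have hSkj : S k j = 0 := by
      rcases hSbin k j with h | h
      · exact h
      · exact absurd (by rw [h]; ring) hj
    -- if L i (σ k) ≠ 0 then Shat (σ k) j ≠ 0 = S k j, contradiction
    by_contra hLne
    have : Shat (σ k) j ≠ 0 := (key (σ k) j).2 ⟨i, hSij, hLne⟩
    rw [← hpart1 k j] at this
    exact this hSkj
  · -- L = (L * permMat σ) * (permMat σ)ᵀ
    have h1 : permMat σ * (permMat σ)ᵀ = 1 := by
      ext i j
      simp only [Matrix.mul_apply, permMat, Matrix.transpose_apply, Matrix.of_apply,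
        Matrix.one_apply, ite_mul, one_mul, zero_mul]
      rw [Equiv.sum_comp σ (fun a => if i = a then (if j = a then (1:ℝ) else 0) else 0)]
      rcases eq_or_ne i j with h | h
      · subst h; simp
      · simp [Finset.sum_ite_eq, h, Ne.symm h]
    rw [Matrix.mul_assoc, h1, Matrix.mul_one]
end

section
/- Let G^z ∈ {0,1}^{d_z×d_z} and G^a ∈ {0,1}^{d_z×d_a} be binary matrices. The following two conditions are equivalent: (A) for all i ∈ {1,...,d_z}, (⋂_{j ∈ Ch^z_i} Pa^z_j) ∩ (⋂_{j ∈ Pa^z_i} Ch^z_j) ∩ (⋂_{ℓ ∈ Pa^a_i} Ch^a_ℓ) = {i}; (B) for all i ∈ {1,...,d_z}, there exist subsets 𝓘, 𝓙 ⊆ {1,...,d_z} and 𝓛 ⊆ {1,...,d_a} such that (⋂_{j ∈ 𝓘} Pa^z_j) ∩ (⋂_{j ∈ 𝓙} Ch^z_j) ∩ (⋂_{ℓ ∈ 𝓛} Ch^a_ℓ) = {i}. (Intersections over an empty index family are taken to equal the full set {1,...,d_z}.) -/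
open Matrix

/-- Parents of `z_i` in `G^z`. -/
def Paz {dz : ℕ} (Gz : Matrix (Fin dz) (Fin dz) ℝ) (i : Fin dz) : Set (Fin dz) :=
  {j | Gz i j = 1}

/-- Children of `z_i` in `G^z`. -/
def Chz {dz : ℕ} (Gz : Matrix (Fin dz) (Fin dz) ℝ) (i : Fin dz) : Set (Fin dz) :=
  {j | Gz j i = 1}

/-- Parents of `z_i` in `G^a`. -/
def Paa {dz da : ℕ} (Ga : Matrix (Fin dz) (Fin da) ℝ) (i : Fin dz) : Set (Fin da) :=
  {l | Ga i l = 1}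

/-- Children of `a_ℓ` in `G^a`. -/
def Cha {dz da : ℕ} (Ga : Matrix (Fin dz) (Fin da) ℝ) (l : Fin da) : Set (Fin dz) :=
  {i | Ga i l = 1}


/-- the graphical criterion intersecting over the natural index sets is
equivalent to its existential version over arbitrary index sets. -/
theorem stmt_16 {dz da : ℕ}
    (Gz : Matrix (Fin dz) (Fin dz) ℝ) (Ga : Matrix (Fin dz) (Fin da) ℝ)
    (hGz : IsBinary Gz) (hGa : IsBinary Ga) :
    (∀ i : Fin dz,
      (⋂ j ∈ Chz Gz i, Paz Gz j) ∩ (⋂ j ∈ Paz Gz i, Chz Gz j) ∩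
        (⋂ l ∈ Paa Ga i, Cha Ga l) = {i}) ↔
    (∀ i : Fin dz, ∃ (I J : Set (Fin dz)) (K : Set (Fin da)),
      (⋂ j ∈ I, Paz Gz j) ∩ (⋂ j ∈ J, Chz Gz j) ∩ (⋂ l ∈ K, Cha Ga l) = {i}) := by
  constructor
  · intro h i
    exact ⟨Chz Gz i, Paz Gz i, Paa Ga i, h i⟩
  · intro h i
    obtain ⟨I, J, K, hIJK⟩ := h i
    have hi : i ∈ (⋂ j ∈ I, Paz Gz j) ∩ (⋂ j ∈ J, Chz Gz j) ∩ (⋂ l ∈ K, Cha Ga l) := by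
      rw [hIJK]; rfl
    simp only [Set.mem_inter_iff, Set.mem_iInter] at hi
    obtain ⟨⟨hiI, hiJ⟩, hiK⟩ := hi
    ext k
    simp only [Set.mem_inter_iff, Set.mem_iInter, Set.mem_singleton_iff]
    constructor
    · rintro ⟨⟨hk1, hk2⟩, hk3⟩
      have : k ∈ (⋂ j ∈ I, Paz Gz j) ∩ (⋂ j ∈ J, Chz Gz j) ∩ (⋂ l ∈ K, Cha Ga l) := by
        simp only [Set.mem_inter_iff, Set.mem_iInter]
        refine ⟨⟨fun j hj => ?_, fun j hj => ?_⟩, fun l hl => ?_⟩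
        · exact hk1 j (hiI j hj)
        · exact hk2 j (hiJ j hj)
        · exact hk3 l (hiK l hl)
      rwa [hIJK] at this
    · rintro rfl
      exact ⟨⟨fun j hj => hj, fun j hj => hj⟩, fun l hl => hl⟩
end

section
/- Let G^z ∈ {0,1}^{d_z×d_z} and G^a ∈ {0,1}^{d_z×d_a} be binary matrices satisfying the graphical criterion: for all i ∈ {1,...,d_z}, (⋂_{j ∈ Ch^z_i} Pa^z_j) ∩ (⋂_{j ∈ Pa^z_i} Ch^z_j) ∩ (⋂_{ℓ ∈ Pa^a_i} Ch^a_ℓ) = {i}, where intersections over an empty index family equal the full set {1,...,d_z}. If a real d_z×d_z matrix C is G^z-consistent, (G^z)ᵀ-consistent, and G^a-consistent, then C is a diagonal matrix, i.e., C_{i,j} = 0 for all i ≠ j. -/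
open Matrix

lemma consist_key {m n : ℕ} (S : Matrix (Fin m) (Fin n) ℝ) (hS : IsBinary S)
    {C : Matrix (Fin m) (Fin m) ℝ} (hc : SConsistent S C) {i j : Fin m} (hC : C i j ≠ 0) :
    ∀ k, S i k = 1 → S j k = 1 := by
  intro k hik
  by_contra hjk
  have hjk0 : S j k = 0 := (hS j k).resolve_right hjk
  apply hC
  apply hc
  unfold consistMask allOnes
  simp only [Matrix.of_apply, Matrix.sub_apply, Matrix.mul_apply, Matrix.transpose_apply]
  have hsum : (1:ℝ) ≤ ∑ l, S i l * ((1:ℝ) - S j l) := by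
    have h := Finset.single_le_sum (f := fun l => S i l * ((1:ℝ) - S j l))
      (fun l _ => by rcases hS i l with h|h <;> rcases hS j l with h'|h' <;> simp [h, h'])
      (Finset.mem_univ k)
    simpa [hik, hjk0] using h
  have hle : (1:ℝ) - ∑ l, S i l * ((1:ℝ) - S j l) ≤ 0 := by linarith
  exact max_eq_left hle

/-- under the graphical criterion, a matrix that is `G^z`-consistent,
`(G^z)ᵀ`-consistent and `G^a`-consistent is diagonal. -/
theorem stmt_17 {dz da : ℕ}
    (Gz : Matrix (Fin dz) (Fin dz) ℝ) (Ga : Matrix (Fin dz) (Fin da) ℝ)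
    (hGz : IsBinary Gz) (hGa : IsBinary Ga)
    (hcrit : ∀ i : Fin dz,
      (⋂ j ∈ Chz Gz i, Paz Gz j) ∩ (⋂ j ∈ Paz Gz i, Chz Gz j) ∩
        (⋂ l ∈ Paa Ga i, Cha Ga l) = {i})
    (C : Matrix (Fin dz) (Fin dz) ℝ)
    (h1 : SConsistent Gz C) (h2 : SConsistent Gzᵀ C) (h3 : SConsistent Ga C) :
    ∀ i j, i ≠ j → C i j = 0 := by
  intro i j hij
  by_contra hC
  have hGzT : IsBinary Gzᵀ := fun a b => hGz b a
  have k1 := consist_key Gz hGz h1 hC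
  have k2 := consist_key Gzᵀ hGzT h2 hC
  have k3 := consist_key Ga hGa h3 hC
  have hj : j ∈ ((⋂ k ∈ Chz Gz i, Paz Gz k) ∩ (⋂ k ∈ Paz Gz i, Chz Gz k) ∩
      (⋂ l ∈ Paa Ga i, Cha Ga l)) := by
    refine ⟨⟨?_, ?_⟩, ?_⟩
    · exact Set.mem_iInter₂.2 fun k hk => k2 k hk
    · exact Set.mem_iInter₂.2 fun k hk => k1 k hk
    · exact Set.mem_iInter₂.2 fun l hl => k3 l hl
  rw [hcrit i] at hj
  exact hij hj.symm
end
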